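/- A fragment CPC↾_B of classical propositional logic is universal if and only if the implication function → is definable from B (i.e., → ∈ [B]). -/

import Mathlib

/-- Membership in the clone generated by a family `B` of Boolean functions. -/
inductive InClone (B : ∀ n : ℕ, Set ((Fin n → Bool) → Bool)) :
    ∀ n : ℕ, ((Fin n → Bool) → Bool) → Prop
  | of {n : ℕ} {f : (Fin n → Bool) → Bool} : f ∈ B n → InClone B n f
  | proj {n : ℕ} (i : Fin n) : InClone B n (fun x => x i)
  | comp {n m : ℕ} (f : (Fin m → Bool) → Bool) (g : Fin m → ((Fin n → Bool) → Bool)) :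
      InClone B m f → (∀ i, InClone B n (g i)) →
      InClone B n (fun x => f (fun i => g i x))

/-- Boolean implication as a binary Boolean function. -/
def impFun : (Fin 2 → Bool) → Bool := fun x => !(x 0) || x 1

/-- Formulas over countably many variables built from the connectives in `B`. -/
inductive BForm (B : ∀ n : ℕ, Set ((Fin n → Bool) → Bool)) : Type
  | var : ℕ → BForm B
  | app : ∀ {n : ℕ} (f : (Fin n → Bool) → Bool), f ∈ B n → (Fin n → BForm B) → BForm B

/-- Boolean evaluation of a `B`-formula. -/
def BForm.eval {B : ∀ n : ℕ, Set ((Fin n → Bool) → Bool)} (v : ℕ → Bool) :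
    BForm B → Bool
  | .var n => v n
  | .app f _ ts => f (fun i => (ts i).eval v)

/-- A Tarski-style deductive system. -/
structure DeductiveSystem (F : Type) where
  Thm : Set F → F → Prop
  refl : ∀ φ : F, Thm {φ} φ
  mono : ∀ {Γ Γ' : Set F} {φ : F}, Thm Γ φ → Γ ⊆ Γ' → Thm Γ' φ
  cut : ∀ {Γ Δ : Set F} {φ : F}, Thm Γ φ → (∀ ψ ∈ Γ, Thm Δ ψ) → Thm Δ φ

/-- Finitarity. -/
def DeductiveSystem.Finitary {F : Type} (L : DeductiveSystem F) : Prop :=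
  ∀ (Γ : Set F) (φ : F), L.Thm Γ φ → ∃ Γ' ⊆ Γ, Γ'.Finite ∧ L.Thm Γ' φ

/-- The fragment `CPC↾_B` of classical logic, as a deductive system. -/
def CpcB (B : ∀ n : ℕ, Set ((Fin n → Bool) → Bool)) : DeductiveSystem (BForm B) where
  Thm Γ φ := ∀ v : ℕ → Bool, (∀ ψ ∈ Γ, ψ.eval v = true) → φ.eval v = true
  refl φ := fun v h => h φ rfl
  mono h hsub := fun v hv => h v (fun ψ hψ => hv ψ (hsub hψ))
  cut h hall := fun v hv => h v (fun ψ hψ => hall ψ hψ v hv)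

/-- A conservative translation. -/
def IsConservative {F0 F1 : Type} (L0 : DeductiveSystem F0) (L1 : DeductiveSystem F1)
    (f : F0 → F1) : Prop :=
  ∀ (Γ : Set F0) (φ : F0), L0.Thm Γ φ ↔ L1.Thm (f '' Γ) (f φ)

/-- Universality: every finitary deductive system over countably many formulas
conservatively translates into `L`. -/
def Universal {F1 : Type} (L1 : DeductiveSystem F1) : Prop :=
  ∀ (F0 : Type), Countable F0 → ∀ L0 : DeductiveSystem F0, L0.Finitary →
    ∃ f : F0 → F1, IsConservative L0 L1 f

/-!
If `→ ∈ [B]`, a fresh variable `q` can play falsum through `φ ↦ (φ → q) → q`, so it suffices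
to encode a countable finitary system `L` with `→` and `⊥`. Number the formulas, give each
formula `φ` an atom, and translate `φ` to the conjunction of "some set of formulas numbered at
most `φ` derives `φ` and has true atoms" with the translations of the rules `Δ, φ ⊢ ψ` among
formulas numbered below `φ`. Soundness is an induction on the number of the conclusion; and under
the valuation making exactly the atoms of a theory `T` true, the true translations are those of
the members of `T`.

Conversely, if `→ ∉ [B]` then all members of `B`, hence all `B`-formulas, preserve `0`, or are
self-dual, affine or monotone. The first two classes contain no tautology. Affine formulas cannot
realize a rule `A ⊢ C` with `C ⊬ A`, `A` satisfiable and `C` not valid. Monotone formulas cannot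
translate infinitely many formulas any two of which derive a fixed formula: its translation
depends on finitely many variables, so two countermodels agree there and their join refutes the
rule. The Post-lattice fact itself is proved on binary truth tables: a function outside each
class restricts to a binary function, and these combine into `→`.
-/

open Function

section

variable {B : ∀ n : ℕ, Set ((Fin n → Bool) → Bool)}

theorem InClone.exists_bform {n : ℕ} {g : (Fin n → Bool) → Bool} (hg : InClone B n g)
    (args : Fin n → BForm B) : ∃ t : BForm B, ∀ v, t.eval v = g fun i => (args i).eval v := by
  induction hg with
  | of hf => exact ⟨.app _ hf args, fun _ => rfl⟩
  | proj i => exact ⟨args i, fun _ => rfl⟩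
  | comp f g _ _ ihf ihg =>
    choose s hs using fun i => ihg i args
    obtain ⟨t, ht⟩ := ihf s
    exact ⟨t, fun v => by simp only [ht, hs]⟩

theorem InClone.mono {B' : ∀ n : ℕ, Set ((Fin n → Bool) → Bool)} (hBB' : ∀ n, B n ⊆ B' n)
    {n : ℕ} {g : (Fin n → Bool) → Bool} (hg : InClone B n g) : InClone B' n g := by
  induction hg with
  | of hf => exact .of (hBB' _ hf)
  | proj i => exact .proj i
  | comp f g _ _ ihf ihg => exact .comp f g ihf ihg

theorem IsConservative.comp {F0 F1 F2 : Type} {L0 : DeductiveSystem F0}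
    {L1 : DeductiveSystem F1} {L2 : DeductiveSystem F2} {f : F0 → F1} {g : F1 → F2}
    (hg : IsConservative L1 L2 g) (hf : IsConservative L0 L1 f) :
    IsConservative L0 L2 (g ∘ f) := fun Γ φ => by
  rw [hf, hg, Set.image_comp, comp_apply]

theorem Universal.of_isConservative {F1 F2 : Type} {L1 : DeductiveSystem F1}
    {L2 : DeductiveSystem F2} (h : Universal L1) {g : F1 → F2} (hg : IsConservative L1 L2 g) :
    Universal L2 := fun F0 hF0 L0 hL0 =>
  let ⟨f, hf⟩ := h F0 hF0 L0 hL0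
  ⟨g ∘ f, hg.comp hf⟩

theorem DeductiveSystem.thm_of_mem {F : Type} (L : DeductiveSystem F) {Γ : Set F} {φ : F}
    (h : φ ∈ Γ) : L.Thm Γ φ :=
  L.mono (L.refl φ) (Set.singleton_subset_iff.2 h)

theorem IsConservative.eval_of_thm {F : Type} {L : DeductiveSystem F} {f : F → BForm B}
    (hf : IsConservative L (CpcB B) f) {Γ : Set F} {φ : F}
    (h : L.Thm Γ φ) (v : ℕ → Bool) (hv : ∀ ψ ∈ Γ, (f ψ).eval v = true) : (f φ).eval v = true :=
  (hf Γ φ).1 h v fun _ ⟨ψ, hψ, hfψ⟩ => hfψ ▸ hv ψ hψ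

theorem IsConservative.exists_eval_of_not_thm {F : Type} {L : DeductiveSystem F}
    {f : F → BForm B} (hf : IsConservative L (CpcB B) f) {Γ : Set F} {φ : F} (h : ¬ L.Thm Γ φ) :
    ∃ v, (∀ ψ ∈ Γ, (f ψ).eval v = true) ∧ (f φ).eval v = false := by
  rw [hf] at h
  simpa [CpcB] using h

structure ImpBot (B : ∀ n : ℕ, Set ((Fin n → Bool) → Bool)) where
  imp : BForm B → BForm B → BForm B
  bot : BForm B
  eval_imp (a b : BForm B) (v : ℕ → Bool) : (imp a b).eval v = (!a.eval v || b.eval v)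
  eval_bot (v : ℕ → Bool) : bot.eval v = false

namespace ImpBot

variable (K : ImpBot B)

def and (a b : BForm B) : BForm B := K.imp (K.imp a (K.imp b K.bot)) K.bot

def or (a b : BForm B) : BForm B := K.imp (K.imp a K.bot) b

noncomputable def bigAnd {α : Type} (s : Finset α) (f : α → BForm B) : BForm B :=
  (s.toList.map f).foldr K.and (K.imp K.bot K.bot)

noncomputable def bigOr {α : Type} (s : Finset α) (f : α → BForm B) : BForm B :=
  (s.toList.map f).foldr K.or K.bot

attribute [simp] eval_bot

@[simp] theorem eval_and (a b : BForm B) (v : ℕ → Bool) :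
    (K.and a b).eval v = (a.eval v && b.eval v) := by
  simp [and, eval_imp]

@[simp] theorem eval_or (a b : BForm B) (v : ℕ → Bool) :
    (K.or a b).eval v = (a.eval v || b.eval v) := by
  simp [or, eval_imp]

theorem eval_imp_eq_true (a b : BForm B) (v : ℕ → Bool) :
    (K.imp a b).eval v = true ↔ (a.eval v = true → b.eval v = true) := by
  cases h : a.eval v <;> simp [h, eval_imp]

theorem eval_bigAnd {α : Type} (s : Finset α) (f : α → BForm B) (v : ℕ → Bool) :
    (K.bigAnd s f).eval v = true ↔ ∀ a ∈ s, (f a).eval v = true := by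
  rw [bigAnd, ← forall_congr' fun a => imp_congr_left (Finset.mem_toList (s := s))]
  induction s.toList <;> simp [*, eval_imp]

theorem eval_bigOr {α : Type} (s : Finset α) (f : α → BForm B) (v : ℕ → Bool) :
    (K.bigOr s f).eval v = true ↔ ∃ a ∈ s, (f a).eval v = true := by
  rw [bigOr, ← exists_congr fun a => and_congr_left' (Finset.mem_toList (s := s))]
  induction s.toList <;> simp [*]

section Encoding

open Classical

variable (K : ImpBot B) {F : Type} (L : DeductiveSystem F) (e : F ↪ ℕ)

noncomputable def derivations (φ : F) : Finset (Finset F) :=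
  ((Finset.range (e φ + 1)).preimage e e.injective.injOn).powerset.filter fun Δ => L.Thm Δ φ

noncomputable def rules (φ : F) : Finset (Finset F × F) :=
  let below := (Finset.range (e φ)).preimage e e.injective.injOn
  (below.powerset ×ˢ below).filter fun r => L.Thm (insert φ r.1) r.2

theorem mem_derivations {φ : F} {Δ : Finset F} :
    Δ ∈ derivations L e φ ↔ (∀ δ ∈ Δ, e δ ≤ e φ) ∧ L.Thm Δ φ := by
  simp [derivations, Finset.subset_iff]

theorem mem_rules {φ : F} {r : Finset F × F} :
    r ∈ rules L e φ ↔ ((∀ δ ∈ r.1, e δ < e φ) ∧ e r.2 < e φ) ∧ L.Thm (insert φ r.1) r.2 := by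
  simp [rules, Finset.subset_iff]

noncomputable def enc (φ : F) : BForm B :=
  K.and (K.bigOr (derivations L e φ) fun Δ => K.bigAnd Δ fun δ => .var (e δ))
    (K.bigAnd (rules L e φ).attach fun r =>
      K.imp (K.bigAnd r.1.1.attach fun δ => enc δ.1) (enc r.1.2))
termination_by e φ
decreasing_by
  · exact ((mem_rules L e).1 r.2).1.1 _ δ.2
  · exact ((mem_rules L e).1 r.2).1.2

theorem eval_enc (φ : F) (v : ℕ → Bool) : (K.enc L e φ).eval v = true ↔
    (∃ Δ ∈ derivations L e φ, ∀ δ ∈ Δ, v (e δ) = true) ∧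
    ∀ r ∈ rules L e φ,
      (∀ δ ∈ r.1, (K.enc L e δ).eval v = true) → (K.enc L e r.2).eval v = true := by
  rw [enc]
  simp [eval_bigOr, eval_bigAnd, eval_imp_eq_true, BForm.eval]

theorem eval_enc_theory_iff {T : Set F} (hT : ∀ φ, L.Thm T φ → φ ∈ T) (φ : F) :
    (K.enc L e φ).eval (fun k => decide (k ∈ e '' T)) = true ↔ φ ∈ T := by
  rw [eval_enc]
  simp only [decide_eq_true_eq, e.injective.mem_set_image]
  constructor
  · rintro ⟨⟨Δ, hΔ, hΔT⟩, -⟩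
    exact hT φ (L.mono ((mem_derivations L e).1 hΔ).2 hΔT)
  · intro hφ
    refine ⟨⟨{φ}, (mem_derivations L e).2 ⟨by simp, by simpa using L.refl φ⟩, by simpa⟩,
      fun r hr hprem => ?_⟩
    have hr' := (mem_rules L e).1 hr
    have hsub : insert φ (r.1 : Set F) ⊆ T := Set.insert_subset hφ fun δ hδ =>
      (eval_enc_theory_iff hT δ).1 (hprem δ hδ)
    exact (eval_enc_theory_iff hT r.2).2 (hT _ (L.mono hr'.2 hsub))
termination_by e φ
decreasing_by
  · exact hr'.1.1 δ hδ
  · exact hr'.1.2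

theorem erase_mem_rules {Δ : Finset F} {χ ψ : F} (h : L.Thm Δ χ)
    (hmax : ∀ δ ∈ Δ, e δ ≤ e ψ) (hχ : e χ < e ψ) : (Δ.erase ψ, χ) ∈ rules L e ψ := by
  refine (mem_rules L e).2 ⟨⟨fun δ hδ => ?_, hχ⟩, L.mono h ?_⟩
  · obtain ⟨hne, hδ⟩ := Finset.mem_erase.1 hδ
    exact (hmax δ hδ).lt_of_ne (e.injective.ne hne)
  · simp

theorem exists_mem_derivations_of_thm (v : ℕ → Bool) {Δ : Finset F} {χ : F} (h : L.Thm Δ χ)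
    (hle : ∀ δ ∈ Δ, e δ ≤ e χ) (hΔ : ∀ δ ∈ Δ, (K.enc L e δ).eval v = true) :
    ∃ Δ' ∈ derivations L e χ, ∀ δ ∈ Δ', v (e δ) = true := by
  have hD : ∀ δ ∈ Δ, ∃ D ∈ derivations L e δ, ∀ x ∈ D, v (e x) = true :=
    fun δ hδ => ((K.eval_enc L e δ v).1 (hΔ δ hδ)).1
  choose D hD hDv using hD
  refine ⟨Δ.attach.biUnion fun δ => D δ.1 δ.2, (mem_derivations L e).2 ⟨?_, L.cut h ?_⟩, ?_⟩
  · simp only [Finset.mem_biUnion, Finset.mem_attach, true_and, Subtype.exists]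
    rintro x ⟨δ, hδ, hx⟩
    exact (((mem_derivations L e).1 (hD δ hδ)).1 x hx).trans (hle δ hδ)
  · intro δ hδ
    refine L.mono ((mem_derivations L e).1 (hD δ hδ)).2 fun x hx => ?_
    simp only [Finset.coe_biUnion, Set.mem_iUnion]
    exact ⟨⟨δ, hδ⟩, by simp, hx⟩
  · simp only [Finset.mem_biUnion, Finset.mem_attach, true_and, Subtype.exists]
    rintro x ⟨δ, hδ, hx⟩
    exact hDv δ hδ x hx

theorem eval_enc_of_thm (v : ℕ → Bool) {Δ : Finset F} {χ : F} (h : L.Thm Δ χ)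
    (hΔ : ∀ δ ∈ Δ, (K.enc L e δ).eval v = true) : (K.enc L e χ).eval v = true := by
  by_cases hbig : ∃ ψ ∈ Δ, e χ < e ψ
  · obtain ⟨ψ₀, hψ₀, hχψ₀⟩ := hbig
    obtain ⟨ψ, hψ, hmax⟩ := Δ.exists_max_image e ⟨ψ₀, hψ₀⟩
    refine ((K.eval_enc L e ψ v).1 (hΔ ψ hψ)).2 _
      (erase_mem_rules L e h hmax (hχψ₀.trans_le (hmax ψ₀ hψ₀))) fun δ hδ => ?_
    exact hΔ δ (Finset.mem_of_mem_erase hδ)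
  · push Not at hbig
    refine (K.eval_enc L e χ v).2
      ⟨K.exists_mem_derivations_of_thm L e v h hbig hΔ, fun r hr hr₁ => ?_⟩
    have hr' := (mem_rules L e).1 hr
    have hcut : L.Thm ↑(Δ ∪ r.1) r.2 := L.cut hr'.2 fun ψ hψ => by
      rcases hψ with rfl | hψ
      · exact L.mono h (by simp)
      · exact L.thm_of_mem (by simp [hψ])
    exact eval_enc_of_thm v hcut fun δ hδ => (Finset.mem_union.1 hδ).elim (hΔ δ) (hr₁ δ)
termination_by e χ
decreasing_by exact hr'.1.2

theorem isConservative_enc (hL : L.Finitary) : IsConservative L (CpcB B) (K.enc L e) := by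
  refine fun Γ φ => ⟨fun h v hv => ?_, fun h => by_contra fun hφ => ?_⟩
  · obtain ⟨Γ', hΓ', hfin, h'⟩ := hL Γ φ h
    lift Γ' to Finset F using hfin
    exact K.eval_enc_of_thm L e v h' fun δ hδ => hv _ ⟨δ, hΓ' hδ, rfl⟩
  · set T := {ψ | L.Thm Γ ψ}
    have hT : ∀ ψ, L.Thm T ψ → ψ ∈ T := fun ψ hψ => L.cut hψ fun _ h => h
    refine hφ ((K.eval_enc_theory_iff L e hT φ).1 (h _ ?_))
    rintro _ ⟨γ, hγ, rfl⟩
    exact (K.eval_enc_theory_iff L e hT γ).2 (L.thm_of_mem hγ)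

end Encoding

theorem universal (K : ImpBot B) : Universal (CpcB B) := fun F _ L hL =>
  let ⟨e, he⟩ := Countable.exists_injective_nat F
  ⟨_, K.isConservative_enc L ⟨e, he⟩ hL⟩

end ImpBot

theorem InClone.exists_imp (h : InClone B 2 impFun) : ∃ imp : BForm B → BForm B → BForm B,
    ∀ a b v, (imp a b).eval v = (!a.eval v || b.eval v) := by
  choose imp himp using fun a b => h.exists_bform ![a, b]
  exact ⟨imp, fun a b v => by simp [himp, impFun]⟩

def withFalse (B : ∀ n : ℕ, Set ((Fin n → Bool) → Bool)) : ∀ n : ℕ, Set ((Fin n → Bool) → Bool) :=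
  fun n => insert (fun _ => false) (B n)

open Classical in
noncomputable def BForm.replaceFalse : BForm (withFalse B) → BForm B
  | .var n => .var (n + 1)
  | .app f _ ts => if h : f ∈ B _ then .app f h fun i => (ts i).replaceFalse else .var 0

theorem BForm.eval_replaceFalse (t : BForm (withFalse B)) {v : ℕ → Bool} (hv : v 0 = false) :
    t.replaceFalse.eval v = t.eval fun n => v (n + 1) := by
  induction t with
  | var n => rfl
  | app f hf ts ih =>
    rw [replaceFalse]
    split_ifs with h
    · simp only [eval, ih]
    · obtain rfl : f = fun _ => false := (Set.mem_insert_iff.1 hf).resolve_right h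
      exact hv

theorem isConservative_replaceFalse (imp : BForm B → BForm B → BForm B)
    (himp : ∀ a b v, (imp a b).eval v = (!a.eval v || b.eval v)) :
    IsConservative (CpcB (withFalse B)) (CpcB B)
      fun t => imp (imp t.replaceFalse (.var 0)) (.var 0) := by
  have key : ∀ (t : BForm (withFalse B)) (v : ℕ → Bool), v 0 = false →
      (imp (imp t.replaceFalse (.var 0)) (.var 0)).eval v = t.eval fun n => v (n + 1) := by
    intro t v hv
    simp [himp, BForm.eval, hv, t.eval_replaceFalse hv]
  refine fun Γ φ => ⟨fun h v hv => ?_, fun h w hw => ?_⟩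
  · cases hv0 : v 0
    · rw [key φ v hv0]
      refine h _ fun ψ hψ => ?_
      rw [← key ψ v hv0]
      exact hv _ ⟨ψ, hψ, rfl⟩
    · simp [himp, BForm.eval, hv0]
  · set v : ℕ → Bool := fun n => if n = 0 then false else w (n - 1)
    have hv0 : v 0 = false := rfl
    have hvw : (fun n => v (n + 1)) = w := rfl
    rw [← hvw, ← key φ v hv0]
    refine h v ?_
    rintro _ ⟨ψ, hψ, rfl⟩
    rw [key ψ v hv0]
    exact hw ψ hψ

theorem universal_of_impFun_mem (h : InClone B 2 impFun) : Universal (CpcB B) := by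
  obtain ⟨imp, himp⟩ := h.exists_imp
  obtain ⟨imp', himp'⟩ := (h.mono fun n => Set.subset_insert _ (B n)).exists_imp
  obtain ⟨bot, hbot⟩ :=
    (InClone.of (Set.mem_insert _ _) : InClone (withFalse B) 0 _).exists_bform Fin.elim0
  exact (ImpBot.mk imp' bot himp' hbot).universal.of_isConservative
    (isConservative_replaceFalse imp himp)

def IsSelfDual {ι : Type*} (f : (ι → Bool) → Bool) : Prop :=
  ∀ x, f (fun i => !x i) = !f x

def IsAffine {ι : Type*} (f : (ι → Bool) → Bool) : Prop :=
  ∀ x y z, f (fun i => x i ^^ y i ^^ z i) = (f x ^^ f y ^^ f z)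

theorem BForm.eval_false (hB : ∀ n, ∀ f ∈ B n, f (fun _ => false) = false) (t : BForm B) :
    t.eval (fun _ => false) = false := by
  induction t with
  | var n => rfl
  | app f hf ts ih => exact (congrArg f (funext ih)).trans (hB _ f hf)

theorem BForm.isSelfDual_eval (hB : ∀ n, ∀ f ∈ B n, IsSelfDual f) (t : BForm B) :
    IsSelfDual fun v => t.eval v := by
  intro v
  induction t with
  | var n => rfl
  | app f hf ts ih => exact (congrArg f (funext ih)).trans (hB _ f hf _)

theorem BForm.isAffine_eval (hB : ∀ n, ∀ f ∈ B n, IsAffine f) (t : BForm B) :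
    IsAffine fun v => t.eval v := by
  intro x y z
  induction t with
  | var n => rfl
  | app f hf ts ih => exact (congrArg f (funext ih)).trans (hB _ f hf _ _ _)

theorem BForm.monotone_eval (hB : ∀ n, ∀ f ∈ B n, Monotone f) (t : BForm B) :
    Monotone fun v => t.eval v := by
  intro v w hvw
  induction t with
  | var n => exact hvw n
  | app f hf ts ih => exact hB _ f hf ih

theorem BForm.exists_finset_eval_congr (t : BForm B) :
    ∃ E : Finset ℕ, ∀ v w : ℕ → Bool, (∀ i ∈ E, v i = w i) → t.eval v = t.eval w := by
  induction t with
  | var n => exact ⟨{n}, fun v w h => h n (Finset.mem_singleton_self n)⟩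
  | app f hf ts ih =>
    choose E hE using ih
    refine ⟨Finset.univ.biUnion E, fun v w h => congrArg f (funext fun i => ?_)⟩
    exact hE i v w fun j hj => h j (Finset.mem_biUnion.2 ⟨i, Finset.mem_univ i, hj⟩)


def DeductiveSystem.trivial : DeductiveSystem Unit where
  Thm _ _ := True
  refl _ := ⟨⟩
  mono _ _ := ⟨⟩
  cut _ _ := ⟨⟩

def DeductiveSystem.singleRule : DeductiveSystem (Fin 3) where
  Thm Γ φ := φ ∈ Γ ∨ (φ = 1 ∧ 0 ∈ Γ)
  refl _ := .inl rfl
  mono h hsub := h.imp (@hsub _) (And.imp_right (@hsub _))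
  cut h hall := h.elim (hall _) fun ⟨h1, h0⟩ => (hall 0 h0).elim (fun h0' => .inr ⟨h1, h0'⟩)
    fun h => .inr ⟨h1, h.2⟩

theorem DeductiveSystem.singleRule_finitary : singleRule.Finitary := by
  rintro Γ φ (h | ⟨rfl, h⟩)
  · exact ⟨{φ}, by simpa, Set.finite_singleton φ, .inl rfl⟩
  · exact ⟨{0}, by simpa, Set.finite_singleton 0, .inr ⟨rfl, rfl⟩⟩

def DeductiveSystem.pairwiseExplosion : DeductiveSystem (Option ℕ) where
  Thm Γ φ := φ ∈ Γ ∨ (φ = none ∧ ∃ m n, m ≠ n ∧ some m ∈ Γ ∧ some n ∈ Γ)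
  refl _ := .inl rfl
  mono h hsub := h.imp (@hsub _) fun ⟨h, m, n, hmn, hm, hn⟩ => ⟨h, m, n, hmn, hsub hm, hsub hn⟩
  cut h hall := by
    rcases h with h | ⟨rfl, m, n, hmn, hm, hn⟩
    · exact hall _ h
    · rcases hall _ hm with hm | ⟨⟨⟩, -⟩
      rcases hall _ hn with hn | ⟨⟨⟩, -⟩
      exact .inr ⟨rfl, m, n, hmn, hm, hn⟩

theorem DeductiveSystem.pairwiseExplosion_finitary : pairwiseExplosion.Finitary := by
  rintro Γ φ (h | ⟨rfl, m, n, hmn, hm, hn⟩)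
  · exact ⟨{φ}, by simpa, Set.finite_singleton φ, .inl rfl⟩
  · refine ⟨{some m, some n}, Set.insert_subset hm (by simpa), by simp, ?_⟩
    exact .inr ⟨rfl, m, n, hmn, by simp, by simp⟩

theorem Universal.exists_tautology (hU : Universal (CpcB B)) :
    ∃ t : BForm B, ∀ v, t.eval v = true := by
  obtain ⟨f, hf⟩ := hU Unit inferInstance DeductiveSystem.trivial fun _ _ _ =>
    ⟨∅, Set.empty_subset _, Set.finite_empty, ⟨⟩⟩
  exact ⟨f (), fun v => hf.eval_of_thm (Γ := ∅) ⟨⟩ v (by simp)⟩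

theorem not_universal_of_eval_false (hB : ∀ n, ∀ f ∈ B n, f (fun _ => false) = false) :
    ¬ Universal (CpcB B) := fun hU => by
  obtain ⟨t, ht⟩ := hU.exists_tautology
  simpa [t.eval_false hB] using ht fun _ => false

theorem not_universal_of_isSelfDual (hB : ∀ n, ∀ f ∈ B n, IsSelfDual f) :
    ¬ Universal (CpcB B) := fun hU => by
  obtain ⟨t, ht⟩ := hU.exists_tautology
  simpa [ht] using t.isSelfDual_eval hB fun _ => false

theorem not_universal_of_isAffine (hB : ∀ n, ∀ f ∈ B n, IsAffine f) :
    ¬ Universal (CpcB B) := fun hU => by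
  obtain ⟨f, hf⟩ := hU (Fin 3) inferInstance _ DeductiveSystem.singleRule_finitary
  have hAC : ∀ v, (f 0).eval v = true → (f 1).eval v = true := fun v hv =>
    hf.eval_of_thm (Γ := {0}) (.inr ⟨rfl, rfl⟩) v (by simpa)
  obtain ⟨v, hv, -⟩ := hf.exists_eval_of_not_thm (Γ := {0}) (φ := 2)
    (by simp [DeductiveSystem.singleRule])
  obtain ⟨w, hw, hAw⟩ := hf.exists_eval_of_not_thm (Γ := {1}) (φ := 0)
    (by simp [DeductiveSystem.singleRule])
  obtain ⟨z, -, hCz⟩ := hf.exists_eval_of_not_thm (Γ := ∅) (φ := 1)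
    (by simp [DeductiveSystem.singleRule])
  simp only [Set.mem_singleton_iff, forall_eq] at hv hw
  have hAz : (f 0).eval z = false := by
    cases h : (f 0).eval z
    · rfl
    · simpa [hCz] using hAC z h
  -- `v ⊕ w ⊕ z` satisfies the translation of `0` but not that of `1`
  have hA := (f 0).isAffine_eval hB v w z
  have hC := (f 1).isAffine_eval hB v w z
  dsimp only at hA hC
  rw [hv, hAw, hAz] at hA
  rw [hAC v hv, hw, hCz] at hC
  exact absurd (hC.symm.trans (hAC _ hA)) (by decide)

theorem not_universal_of_monotone (hB : ∀ n, ∀ f ∈ B n, Monotone f) :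
    ¬ Universal (CpcB B) := fun hU => by
  obtain ⟨f, hf⟩ := hU (Option ℕ) inferInstance _ DeductiveSystem.pairwiseExplosion_finitary
  obtain ⟨E, hE⟩ := (f none).exists_finset_eval_congr
  have hu : ∀ n, ∃ u, (f (some n)).eval u = true ∧ (f none).eval u = false := fun n => by
    obtain ⟨u, hu, hnone⟩ := hf.exists_eval_of_not_thm (Γ := {some n}) (φ := none)
      (by simp [DeductiveSystem.pairwiseExplosion])
    exact ⟨u, hu _ rfl, hnone⟩
  choose u hu using hu
  obtain ⟨m, n, hmn, hmnE⟩ := Finite.exists_ne_map_eq_of_infinite fun n (i : E) => u n i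
  have hsome : ∀ k ∈ ({m, n} : Set ℕ), (f (some k)).eval (u m ⊔ u n) = true := by
    rintro k (rfl | rfl)
    · exact Bool.le_iff_imp.1 ((f (some k)).monotone_eval hB le_sup_left) (hu k).1
    · exact Bool.le_iff_imp.1 ((f (some k)).monotone_eval hB le_sup_right) (hu k).1
  have := hf.eval_of_thm (Γ := {some m, some n}) (φ := none)
    (.inr ⟨rfl, m, n, hmn, by simp, by simp⟩) _ (by simpa using hsome)
  rw [hE _ (u m) fun i hi => ?_, (hu m).2] at this
  · exact absurd this (by decide)
  · simp [← congrFun hmnE ⟨i, hi⟩]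

theorem IsAffine.of_forall_le {ι : Type*} {h : (ι → Bool) → Bool}
    (H : ∀ v w u, v ≤ w → (∀ l, u l = (v l || !w l)) → h u = (h v ^^ h w ^^ h ⊤)) :
    IsAffine h := by
  -- the case `z = ⊤` of affinity, from the comparable pairs `(a ↔ b, ¬a ∨ b)`, `(a, a ∨ b)`,
  -- `(b, a ∨ b)`
  have hxor : ∀ a b u, (∀ l, u l = (a l ^^ b l ^^ true)) → h u = (h a ^^ h b ^^ h ⊤) := by
    intro a b u hu
    have h₁ := H u (fun l => !a l || b l) (fun l => a l || !b l) (fun l => by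
      rw [hu]; dsimp only; cases a l <;> cases b l <;> simp) fun l => by
      simp only [hu]; cases a l <;> cases b l <;> rfl
    have h₂ := H a (fun l => a l || b l) (fun l => a l || !b l) (fun l => by
      dsimp only; cases a l <;> cases b l <;> simp) fun l => by cases a l <;> cases b l <;> rfl
    have h₃ := H b (fun l => a l || b l) (fun l => !a l || b l) (fun l => by
      dsimp only; cases a l <;> cases b l <;> simp) fun l => by cases a l <;> cases b l <;> rfl
    rw [h₂, h₃] at h₁
    revert h₁
    cases h u <;> cases h a <;> cases h b <;> cases h ⊤ <;> cases h (fun l => a l || b l) <;> decide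
  intro x y z
  rw [hxor x (fun l => y l ^^ z l ^^ true) _
    (fun l => by cases x l <;> cases y l <;> cases z l <;> rfl), hxor y z _ fun _ => rfl]
  cases h x <;> cases h y <;> cases h z <;> cases h ⊤ <;> rfl

theorem exists_le_of_not_isAffine {ι : Type*} {h : (ι → Bool) → Bool} (hh : ¬ IsAffine h) :
    ∃ v w, v ≤ w ∧ h (fun l => v l || !w l) ≠ (h v ^^ h w ^^ h ⊤) := by
  contrapose! hh
  exact .of_forall_le fun v w u hvw hu => (funext hu : u = _) ▸ hh v w hvw

theorem monotone_of_forall_update {ι : Type*} [Fintype ι] [DecidableEq ι]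
    {k : (ι → Bool) → Bool}
    (H : ∀ z i, z i = false → k z = true → k (update z i true) = true) : Monotone k := by
  intro x y hxy
  rw [Bool.le_iff_imp]
  intro hx
  have key : ∀ s : Finset ι, k (s.piecewise y x) = true := by
    intro s
    induction s using Finset.induction_on with
    | empty => simpa
    | insert i s hi ih =>
      rw [Finset.piecewise_insert]
      have hpi : s.piecewise y x i = x i := Finset.piecewise_eq_of_notMem _ _ _ hi
      by_cases hxyi : x i = y i
      · rwa [← hxyi, ← hpi, update_eq_self]
      · obtain ⟨hxi, hyi⟩ : x i = false ∧ y i = true := by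
          have := hxy i
          revert this hxyi
          cases x i <;> cases y i <;> simp
        rw [hyi]
        exact H _ i (hpi.trans hxi) ih
  simpa using key Finset.univ

/-- Odd weight, i.e. the algebraic normal form of `Q` contains `a ∧ c`. -/
abbrev IsNonlinear (Q : Bool → Bool → Bool) : Prop :=
  (Q false false ^^ Q false true ^^ Q true false ^^ Q true true) = true

def InBinClone (B : ∀ n : ℕ, Set ((Fin n → Bool) → Bool)) (t : Bool → Bool → Bool) : Prop :=
  InClone B 2 fun x => t (x 0) (x 1)

namespace InBinClone

theorem fst : InBinClone B fun a _ => a := InClone.proj 0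

theorem snd : InBinClone B fun _ c => c := InClone.proj 1

theorem comp {t u w : Bool → Bool → Bool} (ht : InBinClone B t) (hu : InBinClone B u)
    (hw : InBinClone B w) : InBinClone B fun a c => t (u a c) (w a c) :=
  InClone.comp _ ![_, _] ht (Fin.forall_fin_two.2 ⟨hu, hw⟩)

theorem congr {t u : Bool → Bool → Bool} (ht : InBinClone B t) (h : ∀ a c, t a c = u a c) :
    InBinClone B u :=
  funext₂ h ▸ ht

end InBinClone

theorem InClone.inBinClone_comp {n : ℕ} {f : (Fin n → Bool) → Bool} (hf : InClone B n f)
    {p : Bool → Bool → Fin n → Bool} (hp : ∀ l, InBinClone B fun a c => p a c l) :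
    InBinClone B fun a c => f (p a c) :=
  InClone.comp f _ hf hp

theorem inBinClone_not_or_true (hP : ¬ ∀ n, ∀ f ∈ B n, f (fun _ => false) = false) :
    InBinClone B (fun a _ => !a) ∨ InBinClone B fun _ _ => true := by
  push Not at hP
  obtain ⟨n, f, hf, h0⟩ := hP
  have hdiag : InBinClone B fun a _ => f fun _ => a :=
    (InClone.of hf).inBinClone_comp fun _ => .fst
  have key : ∀ d : Bool → Bool, d false ≠ false → (∀ a, d a = !a) ∨ ∀ a, d a = true := by
    decide
  rcases key (fun a => f fun _ => a) h0 with h | h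
  · exact .inl (hdiag.congr fun a _ => h a)
  · exact .inr (hdiag.congr fun a _ => h a)

theorem inBinClone_true_of_not (hN : InBinClone B fun a _ => !a)
    (hD : ¬ ∀ n, ∀ f ∈ B n, IsSelfDual f) : InBinClone B fun _ _ => true := by
  simp only [IsSelfDual, not_forall] at hD
  obtain ⟨n, g, hg, x, hx⟩ := hD
  replace hx : g (fun l => !x l) = g x := by simpa [Bool.eq_not_iff] using hx
  have hconst : InBinClone B fun _ _ => g x := by
    refine ((InClone.of hg).inBinClone_comp (p := fun a _ l => a == x l) fun l => ?_).congr ?_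
    · cases x l
      · exact hN.congr fun a _ => by cases a <;> rfl
      · exact InBinClone.fst.congr fun a _ => by cases a <;> rfl
    · rintro (_ | _) _ <;> simp [hx]
  cases hgx : g x
  · exact (hN.comp hconst hconst).congr fun _ _ => by rw [hgx]; rfl
  · exact hgx ▸ hconst

theorem exists_inBinClone_nonlinear (h1 : InBinClone B fun _ _ => true)
    (hA : ¬ ∀ n, ∀ f ∈ B n, IsAffine f) :
    ∃ Q, InBinClone B Q ∧ IsNonlinear Q := by
  push Not at hA
  obtain ⟨n, h, hh, hna⟩ := hA
  obtain ⟨v, w, hvw, hne⟩ := exists_le_of_not_isAffine hna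
  -- coordinates outside `w` follow `a`, those in `w \ v` follow `c`, those in `v` are fixed to `1`
  refine ⟨fun a c => h fun l => if w l then v l || c else a,
    (InClone.of hh).inBinClone_comp fun l => ?_, ?_⟩
  · cases w l
    · exact InBinClone.fst.congr fun _ _ => rfl
    · cases v l
      · exact InBinClone.snd.congr fun _ _ => rfl
      · exact h1.congr fun _ _ => rfl
  · have hpt : ∀ a c : Bool, ∀ u : Fin n → Bool,
        (∀ l, u l = if w l then v l || c else a) → h u = h fun l => if w l then v l || c else a :=
      fun a c u hu => congrArg h (funext hu)
    dsimp only [IsNonlinear]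
    rw [← hpt false false v fun l => ?_, ← hpt false true w fun l => ?_,
      ← hpt true false (fun l => v l || !w l) fun l => ?_, ← hpt true true ⊤ fun l => ?_]
    · revert hne
      cases h v <;> cases h w <;> cases h ⊤ <;> cases h (fun l => v l || !w l) <;> decide
    all_goals
      have := hvw l
      revert this
      cases v l <;> cases w l <;> simp

theorem InBinClone.xor_const {t : Bool → Bool → Bool} (ht : InBinClone B t)
    (hN : InBinClone B fun a _ => !a) (b : Bool) : InBinClone B fun a c => t a c ^^ b := by
  cases b
  · exact ht.congr fun _ _ => (Bool.xor_false _).symm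
  · exact (hN.comp ht ht).congr fun _ _ => (Bool.xor_true _).symm

theorem InBinClone.imp_of_not (hN : InBinClone B fun a _ => !a) {Q : Bool → Bool → Bool}
    (hQ : InBinClone B Q) (hQ' : IsNonlinear Q) :
    InBinClone B fun a c => !a || c := by
  set α := Q false false ^^ Q true false
  set β := Q false false ^^ Q false true
  -- `Q (a ⊕ β) (c ⊕ α)` differs from `a ∧ c` by a constant
  have key : ∀ Q : Bool → Bool → Bool,
      IsNonlinear Q → ∀ a c,
      (Q (a ^^ (Q false false ^^ Q false true)) (c ^^ !(Q false false ^^ Q true false)) ^^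
        (Q false false ^^ ((Q false false ^^ Q true false) && (Q false false ^^ Q false true)) ^^
          true)) = (!a || c) := by
    decide
  exact ((hQ.comp (fst.xor_const hN β) (snd.xor_const hN !α)).xor_const hN
    (Q false false ^^ (α && β) ^^ true)).congr (key Q hQ')

theorem inBinClone_not_or_iff_or_imp (h1 : InBinClone B fun _ _ => true)
    (hM : ¬ ∀ n, ∀ f ∈ B n, Monotone f) :
    InBinClone B (fun a _ => !a) ∨ InBinClone B (fun a c => a == c) ∨
      InBinClone B fun a c => !a || c := by
  push Not at hM
  obtain ⟨n, k, hk, hkm⟩ := hM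
  obtain ⟨z, i, hzi, hkz, hkz'⟩ :
      ∃ z i, z i = false ∧ k z = true ∧ k (update z i true) = false := by
    contrapose! hkm
    exact monotone_of_forall_update fun z i hzi hkz => by simpa using hkm z i hzi hkz
  have hb : InBinClone B fun a c => k fun l => if l = i then a else z l || c := by
    refine (InClone.of hk).inBinClone_comp fun l => ?_
    by_cases hl : l = i
    · simpa [hl] using InBinClone.fst
    · cases z l
      · simpa [hl] using InBinClone.snd
      · simpa [hl] using h1
  have h00 : (k fun l => if l = i then false else z l || false) = true := by
    refine (congrArg k (funext fun l => ?_)).trans hkz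
    by_cases hl : l = i <;> simp [hl, hzi]
  have h10 : (k fun l => if l = i then true else z l || false) = false := by
    refine (congrArg k (funext fun l => ?_)).trans hkz'
    by_cases hl : l = i <;> simp [hl]
  have key : ∀ b : Bool → Bool → Bool, b false false = true → b true false = false →
      (∀ a c : Bool, b a a = !a) ∨ (∀ a c, b a c = (a == c)) ∨ ∀ a c, b a c = (!a || c) := by
    decide
  rcases key (fun a c => k fun l => if l = i then a else z l || c) h00 h10 with h | h | h
  · exact .inl ((hb.comp .fst .fst).congr h)
  · exact .inr (.inl (hb.congr h))
  · exact .inr (.inr (hb.congr h))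

theorem inBinClone_not_or_imp_of_iff (hiff : InBinClone B fun a c => a == c)
    {Q : Bool → Bool → Bool} (hQ : InBinClone B Q) (hQ' : IsNonlinear Q) :
    InBinClone B (fun a _ => !a) ∨ InBinClone B fun a c => !a || c := by
  have key : ∀ Q : Bool → Bool → Bool,
      IsNonlinear Q →
      (∀ a c : Bool, Q a a = !a) ∨ (∀ a c : Bool, (a == Q a a) = !a) ∨
      (∀ a c, (a == Q a c) = (!a || c)) ∨ (∀ a c, Q (a == c) c = (!a || c)) ∨
      (∀ a c, Q c a = (!a || c)) ∨ ∀ a c, Q a c = (!a || c) := by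
    decide
  rcases key Q hQ' with h | h | h | h | h | h
  · exact .inl ((hQ.comp .fst .fst).congr h)
  · exact .inl ((hiff.comp .fst (hQ.comp .fst .fst)).congr h)
  · exact .inr ((hiff.comp .fst hQ).congr h)
  · exact .inr ((hQ.comp hiff .snd).congr h)
  · exact .inr ((hQ.comp .snd .fst).congr h)
  · exact .inr (hQ.congr h)

theorem impFun_mem_of_not_forall (hP : ¬ ∀ n, ∀ f ∈ B n, f (fun _ => false) = false)
    (hD : ¬ ∀ n, ∀ f ∈ B n, IsSelfDual f) (hA : ¬ ∀ n, ∀ f ∈ B n, IsAffine f)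
    (hM : ¬ ∀ n, ∀ f ∈ B n, Monotone f) : InClone B 2 impFun := by
  suffices InBinClone B fun a c => !a || c from this
  have of_not (hN : InBinClone B fun a _ => !a) : InBinClone B fun a c => !a || c :=
    have ⟨_, hQ, hQ'⟩ := exists_inBinClone_nonlinear (inBinClone_true_of_not hN hD) hA
    hN.imp_of_not hQ hQ'
  obtain hN | h1 := inBinClone_not_or_true hP
  · exact of_not hN
  obtain hN | hiff | himp := inBinClone_not_or_iff_or_imp h1 hM
  · exact of_not hN
  · obtain ⟨_, hQ, hQ'⟩ := exists_inBinClone_nonlinear h1 hA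
    exact (inBinClone_not_or_imp_of_iff hiff hQ hQ').elim of_not id
  · exact himp

end

/-- A fragment `CPC↾_B` of classical propositional logic is universal iff implication
is definable from `B`. -/
theorem cpcB_universal_iff (B : ∀ n : ℕ, Set ((Fin n → Bool) → Bool)) :
    Universal (CpcB B) ↔ InClone B 2 impFun :=
  ⟨fun hU => impFun_mem_of_not_forall (fun h => not_universal_of_eval_false h hU)
      (fun h => not_universal_of_isSelfDual h hU) (fun h => not_universal_of_isAffine h hU)
      (fun h => not_universal_of_monotone h hU),
    universal_of_impFun_mem⟩
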